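/- arXiv:math/9811030 — 2 statements merged into one kernel-verified Lean document; each statement's English description precedes it below -/
import Mathlib

section
/- Let f = x³ − y²z² and M as in the context. The operators −2xyz²∂_x − 3x³∂_y − 4yz² and −2xy²z∂_x − 3x³∂_z − 4y²z both annihilate x^{-2}·e^{1/f} in M. -/
/-!
The vector fields `v = −2xyz²∂_x − 3x³∂_y` and `w = −2xy²z∂_x − 3x³∂_z` annihilate
`f = x³ − y²z²`, so on `x⁻²·e^{1/f}` they act on the coefficient `x⁻²` alone, and
`v(x⁻²) = −2x⁻³·v(x) = 4yz²·x⁻²`, `w(x⁻²) = 4y²z·x⁻²`.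
-/

open MvPolynomial

namespace Derivation

variable {R A : Type*} [CommRing R] [CommRing A] [Algebra R A]

theorem map_inv_sq (D : Derivation R A A) {x x' : A} (hx : x * x' = 1) :
    D (x' ^ 2) = -2 * x' ^ 3 * D x := by
  rw [leibniz_pow, D.leibniz_of_mul_eq_one ((mul_comm x' x).trans hx)]
  simp only [smul_eq_mul, nsmul_eq_mul]
  push_cast
  ring

/-- Read `Gᵢ` as `Dᵢ F`: once the vector field `c₁ D₁ + c₂ D₂` kills `F`, the twist by `e^{1/F}`
drops out. -/
theorem twisted_inv_sq_eq_of_mul_add_mul_eq_zero (D₁ D₂ : Derivation R A A) {x x' : A}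
    (hx : x * x' = 1) {c₁ c₂ G₁ G₂ : A} (hG : c₁ * G₁ + c₂ * G₂ = 0) (w : A) :
    c₁ * (D₁ (x' ^ 2) - x' ^ 2 * G₁ * w) + c₂ * (D₂ (x' ^ 2) - x' ^ 2 * G₂ * w) =
      -2 * x' ^ 3 * (c₁ * D₁ x + c₂ * D₂ x) := by
  rw [map_inv_sq D₁ hx, map_inv_sq D₂ hx]
  linear_combination (-(x' ^ 2) * w) * hG

end Derivation

theorem map_pderiv_cusp_annihilators {R B : Type*} [CommRing R] [CommRing B]
    (φ : MvPolynomial (Fin 3) R →+* B) {f : MvPolynomial (Fin 3) R}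
    (hf : f = X 0 ^ 3 - X 1 ^ 2 * X 2 ^ 2) :
    -2 * φ (X 0) * φ (X 1) * φ (X 2) ^ 2 * φ (pderiv 0 f) + -(3 * φ (X 0) ^ 3) * φ (pderiv 1 f) = 0 ∧
      -2 * φ (X 0) * φ (X 1) ^ 2 * φ (X 2) * φ (pderiv 0 f) +
        -(3 * φ (X 0) ^ 3) * φ (pderiv 2 f) = 0 := by
  subst hf
  constructor <;> simp [pderiv_X, map_ofNat] <;> ring

theorem annihilators_of_xinv_sq_exp_inv_general {K : Type} [Field K]
    (f : MvPolynomial (Fin 3) K) (hf : f = X 0 ^ 3 - X 1 ^ 2 * X 2 ^ 2)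
    (Dx Dy Dz : Derivation K (Localization.Away (X 0 * f)) (Localization.Away (X 0 * f)))
    (hDx : ∀ p : MvPolynomial (Fin 3) K,
      Dx (algebraMap (MvPolynomial (Fin 3) K) (Localization.Away (X 0 * f)) p) =
        algebraMap (MvPolynomial (Fin 3) K) (Localization.Away (X 0 * f)) (pderiv 0 p))
    (hDy : ∀ p : MvPolynomial (Fin 3) K,
      Dy (algebraMap (MvPolynomial (Fin 3) K) (Localization.Away (X 0 * f)) p) =
        algebraMap (MvPolynomial (Fin 3) K) (Localization.Away (X 0 * f)) (pderiv 1 p))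
    (hDz : ∀ p : MvPolynomial (Fin 3) K,
      Dz (algebraMap (MvPolynomial (Fin 3) K) (Localization.Away (X 0 * f)) p) =
        algebraMap (MvPolynomial (Fin 3) K) (Localization.Away (X 0 * f)) (pderiv 2 p)) :
    letI A := Localization.Away (X 0 * f)
    letI x := algebraMap (MvPolynomial (Fin 3) K) A (X 0)
    letI y := algebraMap (MvPolynomial (Fin 3) K) A (X 1)
    letI z := algebraMap (MvPolynomial (Fin 3) K) A (X 2)
    letI F := algebraMap (MvPolynomial (Fin 3) K) A f
    letI xinv := F * IsLocalization.Away.invSelf (S := A) (X 0 * f)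
    letI finv := x * IsLocalization.Away.invSelf (S := A) (X 0 * f)
    letI h := xinv ^ 2
    letI Tx := Dx h - h * algebraMap (MvPolynomial (Fin 3) K) A (pderiv 0 f) * finv ^ 2
    letI Ty := Dy h - h * algebraMap (MvPolynomial (Fin 3) K) A (pderiv 1 f) * finv ^ 2
    letI Tz := Dz h - h * algebraMap (MvPolynomial (Fin 3) K) A (pderiv 2 f) * finv ^ 2
    (-2 * x * y * z ^ 2 * Tx - 3 * x ^ 3 * Ty - 4 * y * z ^ 2 * h = 0) ∧
      (-2 * x * y ^ 2 * z * Tx - 3 * x ^ 3 * Tz - 4 * y ^ 2 * z * h = 0) := by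
  set a := algebraMap (MvPolynomial (Fin 3) K) (Localization.Away (X 0 * f))
  set u := IsLocalization.Away.invSelf (S := Localization.Away (X 0 * f)) (X 0 * f)
  have hxinv : a (X 0) * (a f * u) = 1 := by
    rw [← mul_assoc, ← map_mul]
    exact IsLocalization.Away.mul_invSelf _
  have hDx0 : Dx (a (X 0)) = 1 := by rw [hDx, pderiv_X_self, map_one]
  have hDy0 : Dy (a (X 0)) = 0 := by rw [hDy, pderiv_X_of_ne (by decide), map_zero]
  have hDz0 : Dz (a (X 0)) = 0 := by rw [hDz, pderiv_X_of_ne (by decide), map_zero]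
  obtain ⟨hvf, hwf⟩ := map_pderiv_cusp_annihilators a hf
  have hv := Dx.twisted_inv_sq_eq_of_mul_add_mul_eq_zero Dy hxinv hvf ((a (X 0) * u) ^ 2)
  have hw := Dx.twisted_inv_sq_eq_of_mul_add_mul_eq_zero Dz hxinv hwf ((a (X 0) * u) ^ 2)
  rw [hDx0, hDy0] at hv
  rw [hDx0, hDz0] at hw
  constructor
  · linear_combination hv + 4 * a (X 1) * a (X 2) ^ 2 * (a f * u) ^ 2 * hxinv
  · linear_combination hw + 4 * a (X 1) ^ 2 * a (X 2) * (a f * u) ^ 2 * hxinv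

/-- For `f = x³ − y²z²`, in the rank-one free module over `A = K[x,y,z][1/(x·f)]` with basis
`g = e^{1/f}` and twisted action `∂_•(h·g) = (∂_•h − h·(∂_•f)/f²)·g`, the operators
`−2xyz²∂_x − 3x³∂_y − 4yz²` and `−2xy²z∂_x − 3x³∂_z − 4y²z` annihilate `x^{-2}·g`. The module
is identified with `A` (`g ↦ 1`), `x⁻¹ = f·(xf)⁻¹`, `f⁻¹ = x·(xf)⁻¹`; `Dx, Dy, Dz` are the
derivations on `A` extending the partial derivatives; `x = X 0`, `y = X 1`, `z = X 2`. -/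
theorem annihilators_of_xinv_sq_exp_inv {K : Type} [Field K] [CharZero K]
    (f : MvPolynomial (Fin 3) K) (hf : f = X 0 ^ 3 - X 1 ^ 2 * X 2 ^ 2)
    (Dx Dy Dz : Derivation K (Localization.Away (X 0 * f)) (Localization.Away (X 0 * f)))
    (hDx : ∀ p : MvPolynomial (Fin 3) K,
      Dx (algebraMap (MvPolynomial (Fin 3) K) (Localization.Away (X 0 * f)) p) =
        algebraMap (MvPolynomial (Fin 3) K) (Localization.Away (X 0 * f)) (pderiv 0 p))
    (hDy : ∀ p : MvPolynomial (Fin 3) K,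
      Dy (algebraMap (MvPolynomial (Fin 3) K) (Localization.Away (X 0 * f)) p) =
        algebraMap (MvPolynomial (Fin 3) K) (Localization.Away (X 0 * f)) (pderiv 1 p))
    (hDz : ∀ p : MvPolynomial (Fin 3) K,
      Dz (algebraMap (MvPolynomial (Fin 3) K) (Localization.Away (X 0 * f)) p) =
        algebraMap (MvPolynomial (Fin 3) K) (Localization.Away (X 0 * f)) (pderiv 2 p)) :
    letI A := Localization.Away (X 0 * f)
    letI x := algebraMap (MvPolynomial (Fin 3) K) A (X 0)
    letI y := algebraMap (MvPolynomial (Fin 3) K) A (X 1)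
    letI z := algebraMap (MvPolynomial (Fin 3) K) A (X 2)
    letI F := algebraMap (MvPolynomial (Fin 3) K) A f
    letI xinv := F * IsLocalization.Away.invSelf (S := A) (X 0 * f)
    letI finv := x * IsLocalization.Away.invSelf (S := A) (X 0 * f)
    letI h := xinv ^ 2
    letI Tx := Dx h - h * algebraMap (MvPolynomial (Fin 3) K) A (pderiv 0 f) * finv ^ 2
    letI Ty := Dy h - h * algebraMap (MvPolynomial (Fin 3) K) A (pderiv 1 f) * finv ^ 2
    letI Tz := Dz h - h * algebraMap (MvPolynomial (Fin 3) K) A (pderiv 2 f) * finv ^ 2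
    (-2 * x * y * z ^ 2 * Tx - 3 * x ^ 3 * Ty - 4 * y * z ^ 2 * h = 0) ∧
      (-2 * x * y ^ 2 * z * Tx - 3 * x ^ 3 * Tz - 4 * y ^ 2 * z * h = 0) :=
  annihilators_of_xinv_sq_exp_inv_general f hf Dx Dy Dz hDx hDy hDz
end

section
/- In the second Weyl algebra D_v = K<x,v,∂_x,∂_v>, every element P can be written as a finite sum P = Σ ∂_v^a v^b p_{ab}(x) q_{ab}(∂_x − v²f'(x)∂_v) where p_{ab}, q_{ab} are polynomials over K and f ∈ K[x]; i.e., the elements {∂_v^a v^b x^c (∂_x − v²f'∂_v)^d : a,b,c,d ≥ 0} span D_v as a K-vector space. -/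
/-!
Let `N` be the span of the operators `∂_v^a g q^d` with `g ∈ K[x,v]` arbitrary. It contains `1`
and is stable under left multiplication by every generator: by `∂_v` trivially; by a
multiplication operator `g` and by `q` by induction on `a`, moving them past one factor `∂_v`
with `[∂_v, g] = ∂_v g` and `[q, ∂_v] = (∂_v m) ∂_v`, where `m = v² f'(x)`; and by `∂_x` because
`∂_x = q + m ∂_v`. Hence `N` contains `D_v`, and expanding `g` into monomials `v^b x^c` shows
that `N` is spanned by the monomials of the statement.
-/

open MvPolynomial

theorem Algebra.toSubmodule_adjoin_le_of_mul_mem {R A : Type*} [CommSemiring R] [Semiring A]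
    [Algebra R A] {s : Set A} {N : Submodule R A} (one_mem : (1 : A) ∈ N)
    (mul_mem : ∀ a ∈ s, ∀ x ∈ N, a * x ∈ N) :
    Subalgebra.toSubmodule (Algebra.adjoin R s) ≤ N := by
  rw [Algebra.adjoin_eq_span, Submodule.span_le]
  intro y hy
  induction hy using Submonoid.closure_induction_left with
  | one => exact one_mem
  | mul_left a ha y _ ih => exact mul_mem a ha y ih

theorem Submodule.mul_mem_of_mem_span {R A : Type*} [CommSemiring R] [Semiring A] [Algebra R A]
    {s : Set A} {N : Submodule R A} {a : A} (h : ∀ y ∈ s, a * y ∈ N) {x : A}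
    (hx : x ∈ Submodule.span R s) : a * x ∈ N :=
  Submodule.span_le (p := N.comap (LinearMap.mulLeft R a)) |>.mpr h hx

theorem Derivation.toLinearMap_mul_lmul {R A : Type*} [CommSemiring R] [CommSemiring A]
    [Algebra R A] (D : Derivation R A A) (g : A) :
    D.toLinearMap * Algebra.lmul R A g
      = Algebra.lmul R A g * D.toLinearMap + Algebra.lmul R A (D g) := by
  ext p
  simp [D.leibniz, mul_comm p]

theorem MvPolynomial.commute_pderiv_toLinearMap {R σ : Type*} [CommRing R] (i j : σ) :
    Commute (pderiv (R := R) i).toLinearMap (pderiv (R := R) j).toLinearMap := by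
  have : ⁅pderiv (R := R) i, pderiv (R := R) j⁆ = 0 := by
    classical
    refine MvPolynomial.derivation_ext fun k => ?_
    simp [Derivation.commutator_apply, pderiv_X, Pi.single_apply, apply_ite]
  rw [commute_iff_lie_eq, ← Derivation.commutator_coe_linear_map, this]
  rfl

namespace WeylNormalForm

variable {R : Type*} [CommRing R]

local notation "μ" => Algebra.lmul R (MvPolynomial (Fin 2) R)

noncomputable def dx : Module.End R (MvPolynomial (Fin 2) R) := (pderiv 0).toLinearMap

noncomputable def dv : Module.End R (MvPolynomial (Fin 2) R) := (pderiv 1).toLinearMap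

noncomputable def drift (f : Polynomial R) : MvPolynomial (Fin 2) R :=
  X 1 ^ 2 * Polynomial.aeval (X 0) (Polynomial.derivative f)

noncomputable def q (f : Polynomial R) : Module.End R (MvPolynomial (Fin 2) R) :=
  dx - μ (drift f) * dv

theorem dx_mul_lmul (g : MvPolynomial (Fin 2) R) : dx * μ g = μ g * dx + μ (pderiv 0 g) :=
  (pderiv 0).toLinearMap_mul_lmul g

theorem dv_mul_lmul (g : MvPolynomial (Fin 2) R) : dv * μ g = μ g * dv + μ (pderiv 1 g) :=
  (pderiv 1).toLinearMap_mul_lmul g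

theorem dx_eq_q_add (f : Polynomial R) : dx = q f + μ (drift f) * dv := by
  rw [q, sub_add_cancel]

theorem q_mul_lmul (f : Polynomial R) (g : MvPolynomial (Fin 2) R) :
    q f * μ g = μ g * q f + μ (pderiv 0 g - drift f * pderiv 1 g) := by
  have hcomm : μ (drift f) * μ g = μ g * μ (drift f) := by rw [← map_mul, mul_comm, map_mul]
  rw [q, sub_mul, mul_assoc, dx_mul_lmul, dv_mul_lmul, mul_add, ← mul_assoc, hcomm, map_sub,
    map_mul]
  simp only [mul_assoc, mul_sub]
  abel

theorem q_mul_dv (f : Polynomial R) : q f * dv = dv * q f + μ (pderiv 1 (drift f)) * dv := by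
  have hcomm : dx * dv = dv * dx := (commute_pderiv_toLinearMap (R := R) 0 1).eq
  rw [q, sub_mul, mul_sub, ← mul_assoc dv, dv_mul_lmul, hcomm]
  noncomm_ring

variable (f : Polynomial R)

noncomputable def normalForms : Submodule R (Module.End R (MvPolynomial (Fin 2) R)) :=
  Submodule.span R
    (Set.range fun t : ℕ × MvPolynomial (Fin 2) R × ℕ => dv ^ t.1 * μ t.2.1 * q f ^ t.2.2)

variable {f}

theorem mem_normalForms (a : ℕ) (g : MvPolynomial (Fin 2) R) (d : ℕ) :
    dv ^ a * μ g * q f ^ d ∈ normalForms f :=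
  Submodule.subset_span ⟨(a, g, d), rfl⟩

theorem dv_mul_mem {x : Module.End R (MvPolynomial (Fin 2) R)} (hx : x ∈ normalForms f) :
    dv * x ∈ normalForms f := by
  refine Submodule.mul_mem_of_mem_span ?_ hx
  rintro _ ⟨⟨a, g, d⟩, rfl⟩
  simpa only [← mul_assoc, ← pow_succ'] using mem_normalForms (a + 1) g d

theorem lmul_mul_mem (g : MvPolynomial (Fin 2) R) {x : Module.End R (MvPolynomial (Fin 2) R)}
    (hx : x ∈ normalForms f) : μ g * x ∈ normalForms f := by
  refine Submodule.mul_mem_of_mem_span ?_ hx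
  rintro _ ⟨⟨a, G, d⟩, rfl⟩
  dsimp only
  induction a generalizing g with
  | zero =>
    simpa only [pow_zero, one_mul, ← mul_assoc, ← map_mul] using mem_normalForms 0 (g * G) d
  | succ a ih =>
    have hcomm : μ g * dv = dv * μ g - μ (pderiv 1 g) := by
      rw [dv_mul_lmul, add_sub_cancel_right]
    have expand : μ g * (dv ^ (a + 1) * μ G * q f ^ d)
        = dv * (μ g * (dv ^ a * μ G * q f ^ d))
          - μ (pderiv 1 g) * (dv ^ a * μ G * q f ^ d) := by
      calc μ g * (dv ^ (a + 1) * μ G * q f ^ d)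
          = μ g * dv * (dv ^ a * μ G * q f ^ d) := by simp only [pow_succ', mul_assoc]
        _ = _ := by rw [hcomm, sub_mul, mul_assoc]
    rw [expand]
    exact sub_mem (dv_mul_mem (ih g)) (ih _)

theorem q_mul_mem {x : Module.End R (MvPolynomial (Fin 2) R)} (hx : x ∈ normalForms f) :
    q f * x ∈ normalForms f := by
  refine Submodule.mul_mem_of_mem_span ?_ hx
  rintro _ ⟨⟨a, G, d⟩, rfl⟩
  dsimp only
  induction a with
  | zero =>
    rw [pow_zero, one_mul, ← mul_assoc, q_mul_lmul, add_mul, mul_assoc, ← pow_succ']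
    simpa only [pow_zero, one_mul] using add_mem (mem_normalForms 0 G (d + 1))
      (mem_normalForms 0 (pderiv 0 G - drift f * pderiv 1 G) d)
  | succ a ih =>
    have expand : q f * (dv ^ (a + 1) * μ G * q f ^ d)
        = dv * (q f * (dv ^ a * μ G * q f ^ d))
          + μ (pderiv 1 (drift f)) * (dv * (dv ^ a * μ G * q f ^ d)) := by
      calc q f * (dv ^ (a + 1) * μ G * q f ^ d)
          = q f * dv * (dv ^ a * μ G * q f ^ d) := by simp only [pow_succ', mul_assoc]
        _ = _ := by rw [q_mul_dv, add_mul, mul_assoc, mul_assoc, mul_assoc]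
    rw [expand]
    exact add_mem (dv_mul_mem ih) (lmul_mul_mem _ (dv_mul_mem (mem_normalForms a G d)))

theorem dx_mul_mem {x : Module.End R (MvPolynomial (Fin 2) R)} (hx : x ∈ normalForms f) :
    dx * x ∈ normalForms f := by
  rw [dx_eq_q_add f, add_mul, mul_assoc]
  exact add_mem (q_mul_mem hx) (lmul_mul_mem _ (dv_mul_mem hx))

variable (f)

theorem toSubmodule_adjoin_le_normalForms :
    Subalgebra.toSubmodule (Algebra.adjoin R {μ (X 0), μ (X 1), dx, dv}) ≤ normalForms f := by
  refine Algebra.toSubmodule_adjoin_le_of_mul_mem ?_ ?_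
  · simpa only [pow_zero, map_one, mul_one] using mem_normalForms (f := f) 0 1 0
  · rintro a (rfl | rfl | rfl | rfl) x hx
    exacts [lmul_mul_mem _ hx, lmul_mul_mem _ hx, dx_mul_mem hx, dv_mul_mem hx]

theorem monomial_eq_smul_X_pow_mul_X_pow (s : Fin 2 →₀ ℕ) (c : R) :
    monomial s c = c • (X 1 ^ s 1 * X 0 ^ s 0) := by
  rw [monomial_eq, Finsupp.prod_fintype _ _ (fun _ => pow_zero _), Fin.prod_univ_two, C_mul',
    mul_comm]

theorem normalForms_le_span_monomials :
    normalForms f ≤ Submodule.span R (Set.range fun t : ℕ × ℕ × ℕ × ℕ =>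
      dv ^ t.1 * μ (X 1) ^ t.2.1 * μ (X 0) ^ t.2.2.1 * q f ^ t.2.2.2) := by
  rw [normalForms, Submodule.span_le]
  rintro _ ⟨⟨a, G, d⟩, rfl⟩
  dsimp only
  induction G using MvPolynomial.induction_on' with
  | monomial s c =>
    rw [monomial_eq_smul_X_pow_mul_X_pow, map_smul, map_mul, map_pow, map_pow, mul_smul_comm,
      smul_mul_assoc, ← mul_assoc]
    exact Submodule.smul_mem _ c (Submodule.subset_span ⟨(a, s 1, s 0, d), rfl⟩)
  | add G H hG hH =>
    rw [map_add, mul_add, add_mul]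
    exact add_mem hG hH

end WeylNormalForm

theorem normal_form_spanning_general {K : Type} [Field K] (f : Polynomial K) :
    letI xx : Module.End K (MvPolynomial (Fin 2) K) := LinearMap.mulLeft K (X 0)
    letI vv : Module.End K (MvPolynomial (Fin 2) K) := LinearMap.mulLeft K (X 1)
    letI dx : Module.End K (MvPolynomial (Fin 2) K) := (pderiv (0 : Fin 2)).toLinearMap
    letI dv : Module.End K (MvPolynomial (Fin 2) K) := (pderiv (1 : Fin 2)).toLinearMap
    letI q : Module.End K (MvPolynomial (Fin 2) K) :=
      dx - LinearMap.mulLeft K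
        ((X 1 : MvPolynomial (Fin 2) K) ^ 2 *
          Polynomial.aeval (X 0 : MvPolynomial (Fin 2) K) (Polynomial.derivative f)) * dv
    Subalgebra.toSubmodule (Algebra.adjoin K ({xx, vv, dx, dv} : Set _)) ≤
      Submodule.span K
        (Set.range fun t : ℕ × ℕ × ℕ × ℕ =>
          dv ^ t.1 * vv ^ t.2.1 * xx ^ t.2.2.1 * q ^ t.2.2.2) :=
  (WeylNormalForm.toSubmodule_adjoin_le_normalForms f).trans
    (WeylNormalForm.normalForms_le_span_monomials f)

/-- In the second Weyl algebra `D_v = K<x,v,∂_x,∂_v>` (realized faithfully, `char K = 0`, as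
operators on `K[x,v]` with `x = X 0`, `v = X 1`), the monomials
`∂_v^a v^b x^c (∂_x − v²f'∂_v)^d` span `D_v` as a `K`-vector space. -/
theorem normal_form_spanning {K : Type} [Field K] [CharZero K] (f : Polynomial K) :
    letI xx : Module.End K (MvPolynomial (Fin 2) K) := LinearMap.mulLeft K (X 0)
    letI vv : Module.End K (MvPolynomial (Fin 2) K) := LinearMap.mulLeft K (X 1)
    letI dx : Module.End K (MvPolynomial (Fin 2) K) := (pderiv (0 : Fin 2)).toLinearMap
    letI dv : Module.End K (MvPolynomial (Fin 2) K) := (pderiv (1 : Fin 2)).toLinearMap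
    letI q : Module.End K (MvPolynomial (Fin 2) K) :=
      dx - LinearMap.mulLeft K
        ((X 1 : MvPolynomial (Fin 2) K) ^ 2 *
          Polynomial.aeval (X 0 : MvPolynomial (Fin 2) K) (Polynomial.derivative f)) * dv
    Subalgebra.toSubmodule (Algebra.adjoin K ({xx, vv, dx, dv} : Set _)) ≤
      Submodule.span K
        (Set.range fun t : ℕ × ℕ × ℕ × ℕ =>
          dv ^ t.1 * vv ^ t.2.1 * xx ^ t.2.2.1 * q ^ t.2.2.2) :=
  normal_form_spanning_general f
end
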